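/- arXiv:2311.08917 — 6 statements merged into one kernel-verified Lean document; each statement's English description precedes it below -/
import Mathlib

section
/- Let m, n be positive integers, let u ∈ S_m and v ∈ S_n be permutations, set I = Des(u) ⊆ [m−1] and J = Des(v) ⊆ [n−1], and let A ⊆ [m+n] with |A| = n. Then the descent set of the shifted shuffle satisfies Des(u ⧢_A v[m]) = e(A) ⊔ ((I #_A J) ∖ ē(A)); that is, Des(u ⧢_A v[m]) = I ⧢_A J. -/
/-!
Write `C = [m+n] ∖ A`. The letter of `u ⧢_A v[m]` at position `i` is the `r`-th letter of `v`
plus `m` when `i` is the `r`-th element of `A`, and the `r`-th letter of `u` when `i` is the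
`r`-th element of `C`. Since every letter of `u` is smaller than every letter of `v[m]`,
position `i` is a descent exactly when either `i ∈ A` and `i + 1 ∈ C` (i.e. `i ∈ e(A)`), or
`i, i + 1` both lie in `A` (resp. `C`) and the rank of `i` there is a descent of `v`
(resp. `u`). The last two cases are `(I #_A J) ∖ ē(A)`, while for `i ∈ e(A∁)` the position is
an ascent; this is `I ⧢_A J`.
-/

namespace QSymPaper

attribute [local instance 0] Classical.propDecidable

noncomputable section

/-- A composition condition: all parts are positive. -/
def IsComp (α : List ℕ) : Prop := ∀ a ∈ α, 0 < a

/-- `set(α)`: the set of proper partial sums of `α`. -/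
def setComp (α : List ℕ) : Finset ℕ :=
  (Finset.range (α.length - 1)).image (fun j => (α.take (j + 1)).sum)

/-- `comp(S)` for `S ⊆ [n−1]`: the composition of `n` whose set of partial sums is `S`. -/
def compOf (n : ℕ) (S : Finset ℕ) : List ℕ :=
  if n = 0 then []
  else
    let l := S.sort (· ≤ ·) ++ [n]
    List.zipWith (fun a b => a - b) l (0 :: l)

/-- Monomial quasisymmetric function `M_α`, in the variables of the sub-alphabet `P`. -/
def Mqs (σ : Type) [LinearOrder σ] (F : Type) [CommRing F] (P : σ → Prop) (α : List ℕ) :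
    MvPowerSeries σ F :=
  fun (d : σ →₀ ℕ) => if (∀ i ∈ d.support, P i) ∧ (d.support.sort (· ≤ ·)).map (fun i => d i) = α
    then 1 else 0

/-- Fundamental quasisymmetric function `L_{comp(S)}` (for `S ⊆ [n−1]`). -/
def Lqs (σ : Type) [LinearOrder σ] (F : Type) [CommRing F] (P : σ → Prop)
    (n : ℕ) (S : Finset ℕ) : MvPowerSeries σ F :=
  ∑ T ∈ (Finset.Icc 1 (n - 1)).powerset.filter (fun T => S ⊆ T), Mqs σ F P (compOf n T)

/-- The weight `wt_I(i) = |[1,i−1] ∩ I| + 1`. -/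
def wt (I : Finset ℕ) (i : ℕ) : ℕ := (Finset.Icc 1 (i - 1) ∩ I).card + 1

/-- `A∁ = [N] ∖ A`. -/
def coSet (N : ℕ) (A : Finset ℕ) : Finset ℕ := Finset.Icc 1 N \ A

/-- `e(A)`: right endpoints of the maximal intervals of `A`, except `N`. -/
def eSet (N : ℕ) (A : Finset ℕ) : Finset ℕ := (A.filter (fun b => b + 1 ∉ A)).erase N

/-- `ē(A) = e(A) ∪ e(A∁)`. -/
def ebar (N : ℕ) (A : Finset ℕ) : Finset ℕ := eSet N A ∪ eSet N (coSet N A)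

/-- `T_S`: the image of `T ⊆ [|S|]` under the increasing enumeration of `S` (1-based). -/
def embedIn (S T : Finset ℕ) : Finset ℕ :=
  T.image (fun t => (S.sort (· ≤ ·)).getD (t - 1) 0)

/-- `std_S(T)`: ranks within `S` of the elements of `T ⊆ S`. -/
def stdSet (S T : Finset ℕ) : Finset ℕ :=
  T.image (fun t => (S.filter (· ≤ t)).card)

/-- `I #_A J := I_{A∁} ⊔ J_A`. -/
def hashAJ (N : ℕ) (A I J : Finset ℕ) : Finset ℕ :=
  embedIn (coSet N A) I ∪ embedIn A J

/-- `I ⧢_A J := e(A) ⊔ ((I #_A J) ∖ ē(A))`. -/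
def shSet (N : ℕ) (A I J : Finset ℕ) : Finset ℕ :=
  eSet N A ∪ (hashAJ N A I J \ ebar N A)

/-- The `i`-th entry (1-based) of the word `w`. -/
def wordEntry (w : List ℕ) (i : ℕ) : ℕ := w.getD (i - 1) 0

/-- The descent set of the word `w`. -/
def wordDes (w : List ℕ) : Finset ℕ :=
  (Finset.Icc 1 (w.length - 1)).filter (fun i => wordEntry w (i + 1) < wordEntry w i)

/-- `u ⧢_A v`: the word of length `N` whose subword in positions `A` is `v`
and whose subword in the complementary positions is `u`. -/
def shWord (N : ℕ) (u v : List ℕ) (A : Finset ℕ) : List ℕ :=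
  (List.range N).map (fun p0 =>
    if p0 + 1 ∈ A then v.getD ((A.filter (· ≤ p0 + 1)).card - 1) 0
    else u.getD (((coSet N A).filter (· ≤ p0 + 1)).card - 1) 0)

/-- `v[m]`: the `m`-shifted word. -/
def shiftWord (m : ℕ) (v : List ℕ) : List ℕ := v.map (· + m)

/-- `u` is (the word of) a permutation in `S_m`. -/
def IsPermWord (m : ℕ) (u : List ℕ) : Prop := u.Perm (List.range' 1 m)

/-- `z_A`. -/
def zA (N : ℕ) (A : Finset ℕ) : ℕ :=
  if N ∈ A then WithBot.unbotD 0 (coSet N A).max else WithBot.unbotD 0 A.max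

/-- `J̃_A`. -/
def Jtilde (N : ℕ) (A J : Finset ℕ) : Finset ℕ :=
  if N ∈ A then insert N (embedIn A J) else insert (zA N A) (embedIn A J)

/-- `𝒜_{α,β}` (as a set of subsets of `[m+n]`, where `I = set α`, `J = set β`). -/
def calA (m n : ℕ) (I J : Finset ℕ) : Finset (Finset ℕ) :=
  ((Finset.Icc 1 (m + n)).powersetCard n).filter
    (fun A => ebar (m + n) A \ {zA (m + n) A} ⊆ hashAJ (m + n) A I J)

/-- `Ψ(A) = std_{(I #_A J) ⊔ {z_A} ⊔ {m+n}}(J̃_A)`. -/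
def Psi (m n : ℕ) (I J : Finset ℕ) (A : Finset ℕ) : Finset ℕ :=
  stdSet (insert (m + n) (insert (zA (m + n) A) (hashAJ (m + n) A I J)))
    (Jtilde (m + n) A J)

/-- `α ⧢_D β`: the shuffle of the compositions `α` and `β` whose `β`-entries occupy `D`. -/
def shComp (α β : List ℕ) (D : Finset ℕ) : List ℕ :=
  shWord (α.length + β.length) α β D

/-- `Σ(α,β,D,i)`: the sum of the first `d_i − 1` entries of `α ⧢_D β`. -/
def psum (α β : List ℕ) (D : Finset ℕ) (i : ℕ) : ℕ :=
  ((shComp α β D).take ((D.sort (· ≤ ·)).getD (i - 1) 0 - 1)).sum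

/-- `Φ(D)`. -/
def Phi (α β : List ℕ) (D : Finset ℕ) : Finset ℕ :=
  (Finset.Icc 1 β.length).biUnion (fun i =>
    Finset.Icc (psum α β D i + 1) (psum α β D i + β.getD (i - 1) 0))

/-- The index set for two-way overlapping shuffles of `α` and `β`: triples `(D, S₁, S₂)`
where `D` records the shuffle, `S₁` the positions of `+₁` (an `α`-entry immediately
followed by a `β`-entry) and `S₂` the positions of `+₂`. -/
def twoWayIdx (α β : List ℕ) : Finset (Finset ℕ × Finset ℕ × Finset ℕ) :=
  (((Finset.Icc 1 (α.length + β.length)).powersetCard β.length) ×ˢ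
    ((Finset.Icc 1 (α.length + β.length - 1)).powerset ×ˢ
      (Finset.Icc 1 (α.length + β.length - 1)).powerset)).filter
    (fun x => (∀ p ∈ x.2.1, p ∉ x.1 ∧ p + 1 ∈ x.1) ∧ (∀ p ∈ x.2.2, p ∈ x.1 ∧ p + 1 ∉ x.1))

/-- `γ⁺`: the composition obtained from the two-way overlapping shuffle `(D,S₁,S₂)`
by carrying out the marked additions. -/
def plusComp (α β : List ℕ) (D S₁ S₂ : Finset ℕ) : List ℕ :=
  compOf (α.sum + β.sum)
    (((Finset.Icc 1 (α.length + β.length - 1)) \ (S₁ ∪ S₂)).image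
      (fun p => ((shComp α β D).take p).sum))

/-- `D_α(q,t)`. -/
def Dqt (σ : Type) [LinearOrder σ] (F : Type) [Field F] (P : σ → Prop) (q t : F)
    (α : List ℕ) : MvPowerSeries σ F :=
  if α = [] then 1
  else ∑ T ∈ (setComp α).powerset,
    (q ^ ((T.card + 1 : ℤ) - (α.sum : ℤ)) * (-t) ^ (α.length - (T.card + 1))) •
      Mqs σ F P (compOf α.sum T)

/-- Enriched monomial quasisymmetric function with generic weight `c`
(`c = 2` gives `η_α`, `c = q+1` gives `η_α^{(q)}`). -/
def etaQ (σ : Type) [LinearOrder σ] (F : Type) [CommRing F] (P : σ → Prop) (c : F)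
    (α : List ℕ) : MvPowerSeries σ F :=
  if α = [] then 1
  else ∑ T ∈ (setComp α).powerset, (c ^ (T.card + 1)) • Mqs σ F P (compOf α.sum T)

/-- `K_{comp(J)}(ν)` (for `J ⊆ [n−1]`, `n ≥ 1`). -/
def Kset (σ : Type) [LinearOrder σ] (P : σ → Prop) (ν : ℤ) (n : ℕ) (J : Finset ℕ) :
    MvPowerSeries σ ℂ :=
  ((ν : ℂ) ^ (-((n : ℤ) - 1))) •
    ∑ I ∈ (Finset.Icc 1 (n - 1)).powerset,
      ((-1 : ℂ) ^ ((J \ I).card) *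
        ((ν : ℂ) - 1) ^ ((Finset.Icc 1 (n - 1) \ (I ∪ J)).card)) • Lqs σ ℂ P n I

/-- `K_α(ν)` for a composition `α`. -/
def Kcomp (σ : Type) [LinearOrder σ] (P : σ → Prop) (ν : ℤ) (α : List ℕ) :
    MvPowerSeries σ ℂ :=
  if α = [] then 1 else Kset σ P ν α.sum (setComp α)

/-- The quasisymmetric Hall–Littlewood function `G_I(q)` (for `I ⊆ [n−1]`),
with `q = RatFunc.X`. -/
def Gq (σ : Type) [LinearOrder σ] (P : σ → Prop) (n : ℕ) (I : Finset ℕ) :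
    MvPowerSeries σ (RatFunc ℂ) :=
  ∑ J ∈ (Finset.Icc 1 (n - 1)).powerset.filter (fun J => I ⊆ J),
    ((-1 : RatFunc ℂ) ^ ((J \ I).card) * RatFunc.X ^ (∑ i ∈ J \ I, wt I i)) •
      Lqs σ (RatFunc ℂ) P n J

/-- `G_γ(q)` for a composition `γ`. -/
def Gcomp (σ : Type) [LinearOrder σ] (P : σ → Prop) (γ : List ℕ) :
    MvPowerSeries σ (RatFunc ℂ) :=
  if γ = [] then 1 else Gq σ P γ.sum (setComp γ)

/-- The `q`-monomial quasisymmetric function `M_{comp(I)}(q)` (for `I ⊆ [n−1]`). -/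
def MqF (σ : Type) [LinearOrder σ] (P : σ → Prop) (n : ℕ) (I : Finset ℕ) :
    MvPowerSeries σ (RatFunc ℂ) :=
  ∑ T ∈ (Finset.Icc 1 (n - 1)).powerset.filter (fun T => I ⊆ T),
    ((-RatFunc.X : RatFunc ℂ) ^ (T.card - I.card)) • Lqs σ (RatFunc ℂ) P n T

/-- `M_γ(q)` for a composition `γ`. -/
def Mqcomp (σ : Type) [LinearOrder σ] (P : σ → Prop) (γ : List ℕ) :
    MvPowerSeries σ (RatFunc ℂ) :=
  if γ = [] then 1 else MqF σ P γ.sum (setComp γ)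

/-- `P_w`: positions of the nonzero entries of `w`. -/
def Pset (w : List ℕ) : Finset ℕ :=
  (Finset.Icc 1 w.length).filter (fun i => wordEntry w i ≠ 0)

/-- Standardized descent set `sDes(w)`. -/
def sDes (w : List ℕ) : Finset ℕ := (stdSet (Pset w) (wordDes w)).erase (Pset w).card

def wLe (m : ℕ) (w : List ℕ) : List ℕ := w.filter (fun a => decide (a ≤ m))
def wGt (m : ℕ) (w : List ℕ) : List ℕ := (w.filter (fun a => decide (m < a))).map (· - m)
def wLe0 (m : ℕ) (w : List ℕ) : List ℕ := w.map (fun a => if a ≤ m then a else 0)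
def wGt0 (m : ℕ) (w : List ℕ) : List ℕ := w.map (fun a => if a ≤ m then 0 else a)

/-- 1-based position of `a` in the list `l`. -/
def posIn (l : List ℕ) (a : ℕ) : ℕ := l.idxOf a + 1

/-- The standardized `q`-weight `sw^w_m`. -/
def swq (m : ℕ) (w : List ℕ) (i : ℕ) : RatFunc ℂ :=
  if wordEntry w i ≤ m ∧ wordEntry w (i + 1) ≤ m then
    RatFunc.X ^ wt (wordDes (wLe m w)) (posIn (wLe m w) (wordEntry w i))
  else if m < wordEntry w i ∧ m < wordEntry w (i + 1) then
    RatFunc.X ^ wt (wordDes (wGt m w)) (posIn (wGt m w) (wordEntry w i - m))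
  else 0

/-- `c_q(u,v) = (1−q^u)(1−q^{u−1})⋯(1−q^{u−v+1})`. -/
def cq (u v : ℕ) : RatFunc ℂ := ∏ j ∈ Finset.range v, (1 - RatFunc.X ^ (u - j))

/-- The `t`-th smallest element of `I` (1-based). -/
def nthElt (I : Finset ℕ) (t : ℕ) : ℕ := (I.sort (· ≤ ·)).getD (t - 1) 0

/-- `Bre(I,J)_t`. -/
def bre (I J : Finset ℕ) (t : ℕ) : ℕ :=
  if t = 0 then 0 else (J.filter (· ≤ nthElt I t)).card

/-- `s(I,J)`. -/
def sIJ (I J : Finset ℕ) : ℕ :=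
  ∑ t ∈ Finset.Icc 1 I.card, t * (bre I J t - bre I J (t - 1) - 1)

/-- `Bre(I,J)` as a set. -/
def breSet (I J : Finset ℕ) : Finset ℕ := (Finset.Icc 1 I.card).image (bre I J)

/-- `g(I,J)`. -/
def gIJ (I J : Finset ℕ) : ℕ := ∑ k ∈ Finset.Icc 1 J.card \ breSet I J, k

/-- Near-concatenation `α ⊙ β`. -/
def nearConcat : List ℕ → List ℕ → List ℕ
  | [], β => β
  | α, [] => α
  | α, b :: βs => α.dropLast ++ (α.getLast?.getD 0 + b) :: βs

/-- The field `ℂ(q,t)`. -/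
abbrev Fqt : Type := FractionRing (MvPolynomial (Fin 2) ℂ)

/-- The variable `q` of `ℂ(q,t)`. -/
def qv : Fqt := algebraMap (MvPolynomial (Fin 2) ℂ) Fqt (MvPolynomial.X 0)

/-- The variable `t` of `ℂ(q,t)`. -/
def tv : Fqt := algebraMap (MvPolynomial (Fin 2) ℂ) Fqt (MvPolynomial.X 1)

/-- The combined two-alphabet variable set, every `x`-variable smaller
than every `y`-variable. -/
abbrev Sig2 : Type := ℕ ⊕ₗ ℕ

/-- The full alphabet. -/
def PTot : Sig2 → Prop := fun _ => True

/-- The first (`x`) alphabet. -/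
def PLft : Sig2 → Prop := fun s => (ofLex s).isLeft = true

/-- The second (`y`) alphabet. -/
def PRgt : Sig2 → Prop := fun s => (ofLex s).isRight = true


open Finset

def rankIn (S : Finset ℕ) (i : ℕ) : ℕ := #(S.filter (· ≤ i))

section Rank

variable {S T : Finset ℕ} {i N : ℕ}

lemma rankIn_orderEmbOfFin (S : Finset ℕ) (j : Fin #S) :
    rankIn S (S.orderEmbOfFin rfl j) = j + 1 := by
  have h : S.filter (· ≤ S.orderEmbOfFin rfl j) = (Iic j).image (S.orderEmbOfFin rfl) := by
    ext x
    simp only [mem_filter, mem_image, mem_Iic]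
    constructor
    · rintro ⟨hxS, hxj⟩
      obtain ⟨k, rfl⟩ : x ∈ Set.range (S.orderEmbOfFin rfl) := by
        rwa [range_orderEmbOfFin]
      exact ⟨k, (OrderEmbedding.le_iff_le _).1 hxj, rfl⟩
    · rintro ⟨k, hkj, rfl⟩
      exact ⟨orderEmbOfFin_mem _ _ _, (OrderEmbedding.le_iff_le _).2 hkj⟩
  rw [rankIn, h, card_image_of_injective _ (S.orderEmbOfFin rfl).injective, Fin.card_Iic]

lemma sort_getD_eq_orderEmbOfFin (S : Finset ℕ) {k : ℕ} (hk : k < #S) :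
    (S.sort (· ≤ ·)).getD k 0 = S.orderEmbOfFin rfl ⟨k, hk⟩ := by
  rw [List.getD_eq_getElem _ _ (by rwa [length_sort]), orderEmbOfFin_apply]
  rfl

lemma rankIn_mem (hi : i ∈ S) :
    1 ≤ rankIn S i ∧ rankIn S i ≤ #S ∧ (S.sort (· ≤ ·)).getD (rankIn S i - 1) 0 = i := by
  obtain ⟨j, rfl⟩ : i ∈ Set.range (S.orderEmbOfFin rfl) := by rwa [range_orderEmbOfFin]
  rw [rankIn_orderEmbOfFin, Nat.add_sub_cancel, sort_getD_eq_orderEmbOfFin S j.2]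
  exact ⟨by omega, j.2, rfl⟩

lemma rankIn_succ (hi : i + 1 ∈ S) : rankIn S (i + 1) = rankIn S i + 1 := by
  have h : S.filter (· ≤ i + 1) = insert (i + 1) (S.filter (· ≤ i)) := by
    ext x
    simp only [mem_filter, mem_insert, Nat.le_add_one_iff]
    grind
  rw [rankIn, rankIn, h, card_insert_of_notMem (by simp)]

lemma rankIn_of_subset_Icc (hS : S ⊆ Icc 1 N) : rankIn S N = #S := by
  rw [rankIn, filter_true_of_mem fun x hx => (mem_Icc.1 (hS hx)).2]

lemma mem_embedIn (hT : T ⊆ Icc 1 #S) : i ∈ embedIn S T ↔ i ∈ S ∧ rankIn S i ∈ T := by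
  simp only [embedIn, mem_image]
  constructor
  · rintro ⟨t, ht, rfl⟩
    have htS := mem_Icc.1 (hT ht)
    have hk : t - 1 < #S := by omega
    rw [sort_getD_eq_orderEmbOfFin S hk, rankIn_orderEmbOfFin]
    exact ⟨orderEmbOfFin_mem _ _ _, by rwa [Nat.sub_add_cancel htS.1]⟩
  · rintro ⟨hiS, hr⟩
    exact ⟨rankIn S i, hr, (rankIn_mem hiS).2.2⟩

end Rank

section Words

variable {w x : List ℕ} {S : Finset ℕ} {i : ℕ}

lemma mem_wordDes :
    i ∈ wordDes w ↔ 1 ≤ i ∧ i + 1 ≤ w.length ∧ wordEntry w (i + 1) < wordEntry w i := by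
  rw [wordDes, mem_filter, mem_Icc]
  omega

lemma wordDes_subset_Icc (w : List ℕ) : wordDes w ⊆ Icc 1 (w.length - 1) := filter_subset _ _

lemma wordEntry_mem (h1 : 1 ≤ i) (h2 : i ≤ w.length) : wordEntry w i ∈ w := by
  rw [wordEntry, List.getD_eq_getElem _ _ (by omega)]
  exact List.getElem_mem _

lemma wordEntry_shiftWord (m : ℕ) (h1 : 1 ≤ i) (h2 : i ≤ w.length) :
    wordEntry (shiftWord m w) i = wordEntry w i + m := by
  rw [wordEntry, wordEntry, shiftWord, List.getD_eq_getElem _ _ (by simp; omega),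
    List.getD_eq_getElem _ _ (by omega), List.getElem_map]

lemma wordDes_shiftWord (m : ℕ) (w : List ℕ) : wordDes (shiftWord m w) = wordDes w := by
  ext i
  have hlen : (shiftWord m w).length = w.length := List.length_map _
  simp only [mem_wordDes, hlen]
  constructor <;> rintro ⟨h1, h2, hlt⟩ <;> refine ⟨h1, h2, ?_⟩ <;>
    rw [wordEntry_shiftWord m h1 (by omega), wordEntry_shiftWord m (by omega) h2] at * <;> omega

lemma wordEntry_rankIn_lt_iff (hx : x.length = #S) (hi : i ∈ S) (hi1 : i + 1 ∈ S) :
    wordEntry x (rankIn S (i + 1)) < wordEntry x (rankIn S i) ↔ rankIn S i ∈ wordDes x := by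
  have := (rankIn_mem hi).1
  have := (rankIn_mem hi1).2.1
  rw [rankIn_succ hi1] at *
  rw [mem_wordDes]
  omega

lemma wordEntry_rankIn_mem (hx : x.length = #S) (hi : i ∈ S) : wordEntry x (rankIn S i) ∈ x :=
  wordEntry_mem (rankIn_mem hi).1 (hx ▸ (rankIn_mem hi).2.1)

end Words

section Shuffle

variable {N : ℕ} {A I J : Finset ℕ} {i : ℕ}

lemma mem_coSet : i ∈ coSet N A ↔ 1 ≤ i ∧ i ≤ N ∧ i ∉ A := by
  rw [coSet, mem_sdiff, mem_Icc, and_assoc]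

lemma coSet_subset_Icc : coSet N A ⊆ Icc 1 N := sdiff_subset

lemma card_coSet (hA : A ⊆ Icc 1 N) : #(coSet N A) = N - #A := by
  rw [coSet, card_sdiff_of_subset hA, Nat.card_Icc, Nat.add_sub_cancel]

lemma length_shWord (u v : List ℕ) : (shWord N u v A).length = N := by
  simp [shWord]

lemma wordEntry_shWord (u v : List ℕ) (h1 : 1 ≤ i) (h2 : i ≤ N) :
    wordEntry (shWord N u v A) i =
      if i ∈ A then wordEntry v (rankIn A i) else wordEntry u (rankIn (coSet N A) i) := by
  rw [wordEntry, shWord, List.getD_eq_getElem _ _ (by simp; omega), List.getElem_map,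
    List.getElem_range, Nat.sub_add_cancel h1]
  rfl

/-- Both `Des(u ⧢_A v)` (when every letter of `u` is below every letter of `v`) and
`I ⧢_A J` are described by this case split on whether `i` and `i + 1` lie in `A`. -/
def ShuffleDescent (N : ℕ) (A I J : Finset ℕ) (i : ℕ) : Prop :=
  1 ≤ i ∧ i + 1 ≤ N ∧
    if i ∈ A then (i + 1 ∈ A → rankIn A i ∈ J) else (i + 1 ∉ A ∧ rankIn (coSet N A) i ∈ I)

lemma mem_shSet_iff (hA : A ⊆ Icc 1 N) (hI : I ⊆ Icc 1 (#(coSet N A) - 1))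
    (hJ : J ⊆ Icc 1 (#A - 1)) : i ∈ shSet N A I J ↔ ShuffleDescent N A I J i := by
  have hI' : I ⊆ Icc 1 #(coSet N A) := hI.trans (Icc_subset_Icc le_rfl (Nat.sub_le _ _))
  have hJ' : J ⊆ Icc 1 #A := hJ.trans (Icc_subset_Icc le_rfl (Nat.sub_le _ _))
  have hNI : #(coSet N A) ∉ I := fun h => by have := mem_Icc.1 (hI h); omega
  have hNJ : #A ∉ J := fun h => by have := mem_Icc.1 (hJ h); omega
  simp only [shSet, hashAJ, ebar, eSet, mem_union, mem_sdiff, mem_erase, mem_filter,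
    mem_embedIn hI', mem_embedIn hJ', mem_coSet, ShuffleDescent]
  by_cases hrange : 1 ≤ i ∧ i < N
  · obtain ⟨h1, hiN⟩ := hrange
    by_cases hiA : i ∈ A <;> by_cases hi1A : i + 1 ∈ A <;>
      simp [hiA, hi1A, h1, hiN, hiN.ne, hiN.le]
  · rcases (show i = N ∨ i ∉ Icc 1 N by rw [mem_Icc]; omega) with rfl | hout
    · by_cases hNA : i ∈ A
      · simp [hNA, rankIn_of_subset_Icc hA, hNJ]
      · simp [hNA, rankIn_of_subset_Icc coSet_subset_Icc, hNI]
    · have hiA : i ∉ A := fun h => hout (hA h)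
      rw [mem_Icc] at hout
      grind

lemma mem_wordDes_shWord {u v : List ℕ} (hu : u.length = #(coSet N A))
    (hv : v.length = #A) (huv : ∀ a ∈ u, ∀ b ∈ v, a < b) :
    i ∈ wordDes (shWord N u v A) ↔ ShuffleDescent N A (wordDes u) (wordDes v) i := by
  rw [mem_wordDes, length_shWord, ShuffleDescent]
  refine and_congr_right fun h1 => and_congr_right fun h2 => ?_
  have hC : ∀ {j}, 1 ≤ j → j ≤ N → j ∉ A → j ∈ coSet N A := fun hj1 hjN hjA =>
    mem_coSet.2 ⟨hj1, hjN, hjA⟩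
  rw [wordEntry_shWord u v (by omega) h2, wordEntry_shWord u v h1 (by omega)]
  by_cases hiA : i ∈ A <;> by_cases hi1A : i + 1 ∈ A <;> simp only [hiA, hi1A, if_true, if_false]
  · simpa using wordEntry_rankIn_lt_iff hv hiA hi1A
  · simpa using huv _ (wordEntry_rankIn_mem hu (hC (by omega) h2 hi1A)) _
      (wordEntry_rankIn_mem hv hiA)
  · simpa using (huv _ (wordEntry_rankIn_mem hu (hC h1 (by omega) hiA)) _
      (wordEntry_rankIn_mem hv hi1A)).le
  · simpa using wordEntry_rankIn_lt_iff hu (hC h1 (by omega) hiA) (hC (by omega) h2 hi1A)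

theorem wordDes_shWord {u v : List ℕ} (hA : A ⊆ Icc 1 N) (hu : u.length = #(coSet N A))
    (hv : v.length = #A) (huv : ∀ a ∈ u, ∀ b ∈ v, a < b) :
    wordDes (shWord N u v A) = shSet N A (wordDes u) (wordDes v) := by
  ext i
  rw [mem_wordDes_shWord hu hv huv,
    mem_shSet_iff hA (hu ▸ wordDes_subset_Icc u) (hv ▸ wordDes_subset_Icc v)]

end Shuffle

lemma IsPermWord.mem_iff {m : ℕ} {u : List ℕ} (hu : IsPermWord m u) {a : ℕ} :
    a ∈ u ↔ 1 ≤ a ∧ a ≤ m := by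
  rw [List.Perm.mem_iff hu, List.mem_range'_1]
  omega

theorem statement0_general (m n : ℕ)
    (u v : List ℕ) (hu : IsPermWord m u) (hv : IsPermWord n v)
    (A : Finset ℕ) (hA : A ⊆ Finset.Icc 1 (m + n)) (hAcard : A.card = n) :
    wordDes (shWord (m + n) u (shiftWord m v) A) =
      shSet (m + n) A (wordDes u) (wordDes v) := by
  have hulen : u.length = #(coSet (m + n) A) := by
    rw [card_coSet hA, hAcard, Nat.add_sub_cancel, ← List.length_range' (s := 1) (n := m)]
    exact hu.length_eq
  have hvlen : (shiftWord m v).length = #A := by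
    rw [shiftWord, List.length_map, hAcard, ← List.length_range' (s := 1) (n := n)]
    exact hv.length_eq
  have hsmall : ∀ a ∈ u, ∀ b ∈ shiftWord m v, a < b := by
    intro a ha b hb
    obtain ⟨c, hc, rfl⟩ := List.mem_map.1 hb
    have := hu.mem_iff.1 ha
    have := hv.mem_iff.1 hc
    omega
  rw [wordDes_shWord hA hulen hvlen hsmall, wordDes_shiftWord]

/-- the descent set of a shifted shuffle `u ⧢_A v[m]` equals
`e(A) ⊔ ((I #_A J) ∖ ē(A)) = I ⧢_A J`, where `I = Des(u)`, `J = Des(v)`. -/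
theorem statement0 (m n : ℕ) (hm : 0 < m) (hn : 0 < n)
    (u v : List ℕ) (hu : IsPermWord m u) (hv : IsPermWord n v)
    (A : Finset ℕ) (hA : A ⊆ Finset.Icc 1 (m + n)) (hAcard : A.card = n) :
    wordDes (shWord (m + n) u (shiftWord m v) A) =
      shSet (m + n) A (wordDes u) (wordDes v) :=
  statement0_general m n u v hu hv A hA hAcard

end
end QSymPaper
end

section
/- Let ν > 1 be an integer and n ≥ 1. For every I ⊆ [n−1], L_{comp(I)} = ∑_{J ⊆ [n−1]} (−1)^{|J∖I|} (ν−1)^{|I∩J|} K_{comp(J)}(ν), as an identity of quasisymmetric functions over ℂ. -/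
namespace QSymPaper

attribute [local instance 0] Classical.propDecidable

noncomputable section

/-
The coefficients `ν^{-(n-1)} (-1)^{|J∖I'|} (ν-1)^{|[n-1]∖(I'∪J)|}` of `K_{comp(J)}(ν)` in the
`L`-basis and the claimed inverse coefficients `(-1)^{|J∖I|} (ν-1)^{|I∩J|}` are products over
`e ∈ [n-1]` of factors that depend only on whether `e` lies in `I`, `J`, `I'`. Summing their
product over `J ⊆ [n-1]` therefore gives a product over `e` of the sum of the factors for
`e ∈ J` and `e ∉ J`, which is `ν` when `e ∈ I ↔ e ∈ I'` and `0` otherwise. So the two matrices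
are inverse to each other.
-/

section Orthogonality

open Finset

variable {ι R : Type*} [DecidableEq ι] [CommRing R]

theorem prod_ite_mem_one_eq_pow_card_sdiff (c : R) (J K : Finset ι) :
    ∏ e ∈ J, (if e ∈ K then 1 else c) = c ^ #(J \ K) := by
  rw [prod_ite, prod_const_one, one_mul, prod_const, filter_notMem_eq_sdiff]

theorem prod_ite_mem_eq_pow_card_inter (x : R) (J K : Finset ι) :
    ∏ e ∈ J, (if e ∈ K then x else 1) = x ^ #(J ∩ K) := by
  rw [prod_ite_mem, prod_const]

theorem sum_powerset_sign_mul_pow_orthogonal (x : R) {E I I' : Finset ι}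
    (hI : I ⊆ E) (hI' : I' ⊆ E) :
    ∑ J ∈ E.powerset,
      ((-1 : R) ^ #(J \ I) * x ^ #(I ∩ J)) * ((-1 : R) ^ #(J \ I') * x ^ #(E \ (I' ∪ J))) =
    if I = I' then (x + 1) ^ #E else 0 := by
  let f : ι → R := fun e =>
    (if e ∈ I then 1 else -1) * (if e ∈ I' then 1 else -1) * (if e ∈ I then x else 1)
  let g : ι → R := fun e => if e ∈ I' then 1 else x
  have summand_eq : ∀ J ∈ E.powerset,
      ((-1 : R) ^ #(J \ I) * x ^ #(I ∩ J)) * ((-1 : R) ^ #(J \ I') * x ^ #(E \ (I' ∪ J))) =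
      (∏ e ∈ J, f e) * ∏ e ∈ E \ J, g e := by
    intro J _
    have hsdiff : (E \ J) \ I' = E \ (I' ∪ J) := by
      rw [sdiff_sdiff_left, sup_eq_union, union_comm]
    simp only [f, g, prod_mul_distrib, prod_ite_mem_one_eq_pow_card_sdiff,
      prod_ite_mem_eq_pow_card_inter, hsdiff, inter_comm J I]
    ring
  have factor_eq : ∀ e, f e + g e = if (e ∈ I ↔ e ∈ I') then x + 1 else 0 := by
    intro e
    by_cases h : e ∈ I <;> by_cases h' : e ∈ I' <;> simp [f, g, h, h', add_comm]
  rw [sum_congr rfl summand_eq, ← prod_add]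
  split_ifs with hII
  · subst hII
    rw [← prod_const]
    exact prod_congr rfl fun e _ => by simp [factor_eq]
  · obtain ⟨e, he⟩ : ∃ e, ¬ (e ∈ I ↔ e ∈ I') := by
      by_contra! h
      exact hII (ext h)
    have heE : e ∈ E := by
      by_cases h : e ∈ I
      · exact hI h
      · exact hI' (by tauto)
    exact prod_eq_zero heE (by rw [factor_eq, if_neg he])

end Orthogonality

theorem zpow_neg_sub_one_mul_pow_card_Icc {G₀ : Type*} [GroupWithZero G₀] {ν : G₀} (hν : ν ≠ 0) {n : ℕ} (hn : 1 ≤ n) :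
    ν ^ (-((n : ℤ) - 1)) * ν ^ (Finset.Icc 1 (n - 1)).card = 1 := by
  have hcard : ((n : ℤ) - 1) = (((Finset.Icc 1 (n - 1)).card : ℕ) : ℤ) := by
    rw [Nat.card_Icc]; omega
  rw [hcard, zpow_neg, zpow_natCast, inv_mul_cancel₀ (pow_ne_zero _ hν)]

/-- expansion of the fundamental quasisymmetric function in the
basis `{K_{comp(J)}(ν)}`. -/
theorem statement5 (ν : ℤ) (hν : 1 < ν) (n : ℕ) (hn : 1 ≤ n)
    (I : Finset ℕ) (hI : I ⊆ Finset.Icc 1 (n - 1)) :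
    Lqs ℕ ℂ (fun _ => True) n I =
      ∑ J ∈ (Finset.Icc 1 (n - 1)).powerset,
        ((-1 : ℂ) ^ ((J \ I).card) * ((ν : ℂ) - 1) ^ ((I ∩ J).card)) •
          Kset ℕ (fun _ => True) ν n J := by
  set E := Finset.Icc 1 (n - 1)
  set s : ℂ := (ν : ℂ) ^ (-((n : ℤ) - 1))
  set L : Finset ℕ → MvPowerSeries ℕ ℂ := Lqs ℕ ℂ (fun _ => True) n
  have hs : s * ((ν : ℂ) - 1 + 1) ^ E.card = 1 := by
    rw [sub_add_cancel]
    exact zpow_neg_sub_one_mul_pow_card_Icc (by exact_mod_cast (by omega : ν ≠ 0)) hn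
  symm
  calc ∑ J ∈ E.powerset, ((-1 : ℂ) ^ (J \ I).card * ((ν : ℂ) - 1) ^ (I ∩ J).card) •
          Kset ℕ (fun _ => True) ν n J
      = ∑ I' ∈ E.powerset, (s * ∑ J ∈ E.powerset,
          ((-1 : ℂ) ^ (J \ I).card * ((ν : ℂ) - 1) ^ (I ∩ J).card) *
            ((-1 : ℂ) ^ (J \ I').card * ((ν : ℂ) - 1) ^ (E \ (I' ∪ J)).card)) • L I' := by
        simp only [Kset, smul_smul, Finset.smul_sum, Finset.mul_sum, Finset.sum_smul]
        rw [Finset.sum_comm]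
        refine Finset.sum_congr rfl fun I' _ => Finset.sum_congr rfl fun J _ => ?_
        congr 1
        ring
    _ = ∑ I' ∈ E.powerset, (if I = I' then (1 : ℂ) else 0) • L I' := by
        refine Finset.sum_congr rfl fun I' hI' => ?_
        rw [sum_powerset_sign_mul_pow_orthogonal _ hI (Finset.mem_powerset.mp hI'),
          mul_ite, hs, mul_zero]
    _ = L I := by
        simp only [ite_smul, one_smul, zero_smul]
        rw [Finset.sum_ite_eq, if_pos (Finset.mem_powerset.mpr hI)]

end
end QSymPaper
end

section
/- Let ν > 1 be an integer and n ≥ 1. For every I ⊆ [n−1], M_{comp(I)} = ∑_{J ⊆ [n−1], I∪J = [n−1]} (−ν)^{|J∖I|} (ν−1)^{|I∩J|} K_{comp(J)}(ν), as an identity of quasisymmetric functions over ℂ. -/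
namespace QSymPaper

attribute [local instance 0] Classical.propDecidable

noncomputable section

/-! Expanding each `K_J` in the `L`-basis and exchanging the sums, the coefficient of `L_T` is a
sum over `J ⊇ [n−1] ∖ I` whose summand is a product of local factors, one per point of `[n−1]`.
The sum therefore factorises; the local sums are `ν`, `0` or `−ν`, so the coefficient is
`[I ⊆ T] (−1)^{|T∖I|} ν^{n−1}`, which cancels the normalisation `ν^{−(n−1)}`. What remains is
`∑_{T ⊇ I} (−1)^{|T∖I|} L_T`, which is `M_I` by Möbius inversion on the Boolean lattice, because
`L_T = ∑_{S ⊇ T} M_S`. -/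

open Finset

section PowersetSums

variable {α : Type*} [DecidableEq α] {R : Type*} [CommRing R]

theorem sum_Icc_neg_one_pow_card_sdiff {s t : Finset α} (hst : s ⊆ t) :
    ∑ u ∈ Icc s t, (-1 : R) ^ #(u \ s) = if s = t then 1 else 0 := by
  have hdisj : ∀ w ∈ (t \ s).powerset, Disjoint s w := fun w hw =>
    disjoint_of_subset_right (mem_powerset.mp hw) disjoint_sdiff
  have hinj : Set.InjOn (s ∪ ·) (t \ s).powerset := fun u hu v hv huv => by
    simpa [union_sdiff_cancel_left (hdisj u hu), union_sdiff_cancel_left (hdisj v hv)]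
      using congrArg (· \ s) huv
  rw [Icc_eq_image_powerset hst, sum_image hinj,
    sum_congr rfl fun u hu => by rw [union_sdiff_cancel_left (hdisj u hu)]]
  have := congrArg (Int.cast : ℤ → R) (sum_powerset_neg_one_pow_card (x := t \ s))
  push_cast at this
  rw [this]
  exact if_congr (sdiff_eq_empty_iff_subset.trans
    ⟨fun h => (subset_antisymm h hst).symm, fun h => h ▸ subset_rfl⟩) rfl rfl

theorem sum_Icc_neg_one_pow_smul_sum_Icc {M : Type*} [AddCommGroup M] [Module R M]
    (f : Finset α → M) {s N : Finset α} (hsN : s ⊆ N) :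
    ∑ t ∈ Icc s N, (-1 : R) ^ #(t \ s) • ∑ u ∈ Icc t N, f u = f s := by
  calc ∑ t ∈ Icc s N, (-1 : R) ^ #(t \ s) • ∑ u ∈ Icc t N, f u
      = ∑ u ∈ Icc s N, (∑ t ∈ Icc s u, (-1 : R) ^ #(t \ s)) • f u := by
        simp only [smul_sum, sum_smul]
        refine sum_comm' fun t u => ?_
        simp only [mem_Icc]
        exact ⟨fun ⟨⟨h1, _⟩, h3, h4⟩ => ⟨⟨h1, h3⟩, h1.trans h3, h4⟩,
          fun ⟨⟨h1, h2⟩, _, h4⟩ => ⟨⟨h1, h2.trans h4⟩, h2, h4⟩⟩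
    _ = f s := by
        rw [sum_congr rfl fun u hu => by
          rw [sum_Icc_neg_one_pow_card_sdiff (mem_Icc.mp hu).1, ite_smul, one_smul, zero_smul]]
        exact (sum_ite_eq _ _ _).trans (if_pos (mem_Icc.mpr ⟨subset_rfl, hsN⟩))

theorem sum_powerset_filter_union_eq (x : R) {N I T : Finset α} (hI : I ⊆ N) (hT : T ⊆ N) :
    ∑ J ∈ N.powerset with I ∪ J = N,
      (-x) ^ #(J \ I) * (x - 1) ^ #(I ∩ J) * ((-1) ^ #(J \ T) * (x - 1) ^ #(N \ (T ∪ J))) =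
      if I ⊆ T then (-1) ^ #(T \ I) * x ^ #N else 0 := by
  -- the factors contributed by a point `a ∈ J`, resp. `a ∉ J`; `g` vanishes off `I`,
  -- which enforces `I ∪ J = N`
  set f : α → R := fun a => (if a ∈ I then x - 1 else -x) * (if a ∈ T then 1 else -1)
  set g : α → R := fun a => if a ∈ I then (if a ∈ T then 1 else x - 1) else 0
  have hterm : ∀ J ⊆ N, (∏ a ∈ J, f a) * ∏ a ∈ N \ J, g a =
      if I ∪ J = N then
        (-x) ^ #(J \ I) * (x - 1) ^ #(I ∩ J) * ((-1) ^ #(J \ T) * (x - 1) ^ #(N \ (T ∪ J)))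
      else 0 := by
    intro J hJ
    have hf : ∏ a ∈ J, f a = (x - 1) ^ #(I ∩ J) * (-x) ^ #(J \ I) * (-1) ^ #(J \ T) := by
      simp only [f, prod_mul_distrib, prod_ite, prod_const, filter_mem_eq_inter,
        filter_notMem_eq_sdiff, one_pow, one_mul, inter_comm J I]
    split_ifs with hIJ
    · have hg : ∏ a ∈ N \ J, g a = (x - 1) ^ #(N \ (T ∪ J)) := by
        have hNJ : N \ J ⊆ I := sdiff_le_iff.mpr (by rw [sup_eq_union, union_comm, hIJ])
        rw [prod_congr rfl fun a ha => if_pos (hNJ ha)]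
        simp only [prod_ite, prod_const, filter_notMem_eq_sdiff, one_pow, one_mul,
          sdiff_sdiff_left, sup_eq_union, union_comm J T]
      rw [hf, hg]; ring
    · have hNJ : ¬ N \ J ⊆ I := fun h =>
        hIJ (subset_antisymm (union_subset hI hJ) (by simpa [union_comm] using sdiff_le_iff.mp h))
      obtain ⟨a, ha, haI⟩ := not_subset.mp hNJ
      rw [prod_eq_zero ha (by simp [g, haI]), mul_zero]
  have hprod : ∏ a ∈ N, (f a + g a) = if I ⊆ T then (-1) ^ #(T \ I) * x ^ #N else 0 := by
    split_ifs with hIT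
    · have hlocal : ∀ a, f a + g a = (if a ∈ T \ I then -1 else 1) * x := fun a => by
        by_cases haI : a ∈ I
        · simp [f, g, haI, hIT haI]
        · by_cases haT : a ∈ T <;> simp [f, g, haI, haT]
      simp only [hlocal, prod_mul_distrib, prod_ite, prod_const, one_pow, mul_one,
        filter_mem_eq_inter, inter_eq_right.mpr (sdiff_subset.trans hT)]
    · obtain ⟨a, haI, haT⟩ := not_subset.mp hIT
      exact prod_eq_zero (hI haI) (by simp [f, g, haI, haT])
  rw [sum_filter, ← hprod, prod_add]
  exact (sum_congr rfl fun J hJ => hterm J (mem_powerset.mp hJ)).symm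

end PowersetSums

/-- expansion of the monomial quasisymmetric function in the
basis `{K_{comp(J)}(ν)}`. -/
theorem statement6 (ν : ℤ) (hν : 1 < ν) (n : ℕ) (hn : 1 ≤ n)
    (I : Finset ℕ) (hI : I ⊆ Finset.Icc 1 (n - 1)) :
    Mqs ℕ ℂ (fun _ => True) (compOf n I) =
      ∑ J ∈ (Finset.Icc 1 (n - 1)).powerset.filter
          (fun J => I ∪ J = Finset.Icc 1 (n - 1)),
        ((-(ν : ℂ)) ^ ((J \ I).card) * ((ν : ℂ) - 1) ^ ((I ∩ J).card)) •
          Kset ℕ (fun _ => True) ν n J := by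
  set N := Icc 1 (n - 1)
  set L := Lqs ℕ ℂ (fun _ => True) n
  have hν0 : (ν : ℂ) ^ #N ≠ 0 := pow_ne_zero _ (Int.cast_ne_zero.mpr (by omega))
  have hscale : (ν : ℂ) ^ (-((n : ℤ) - 1)) = ((ν : ℂ) ^ #N)⁻¹ := by
    rw [Nat.card_Icc, zpow_neg, ← zpow_natCast]
    congr 2
    omega
  calc Mqs ℕ ℂ (fun _ => True) (compOf n I)
      = ∑ T ∈ Icc I N, (-1 : ℂ) ^ #(T \ I) • L T := by
        rw [← sum_Icc_neg_one_pow_smul_sum_Icc (R := ℂ)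
          (fun S => Mqs ℕ ℂ (fun _ => True) (compOf n S)) hI]
        refine sum_congr rfl fun T _ => ?_
        rw [Icc_eq_filter_powerset]
        rfl
    _ = ∑ T ∈ N.powerset, ((ν : ℂ) ^ (-((n : ℤ) - 1)) *
          ∑ J ∈ N.powerset with I ∪ J = N, (-(ν : ℂ)) ^ #(J \ I) * ((ν : ℂ) - 1) ^ #(I ∩ J) *
            ((-1) ^ #(J \ T) * ((ν : ℂ) - 1) ^ #(N \ (T ∪ J)))) • L T := by
        rw [Icc_eq_filter_powerset, sum_filter]
        refine sum_congr rfl fun T hT => ?_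
        rw [sum_powerset_filter_union_eq _ hI (mem_powerset.mp hT), hscale]
        split_ifs
        · rw [mul_left_comm, inv_mul_cancel₀ hν0, mul_one]
        · rw [mul_zero, zero_smul]
    _ = _ := by
        simp only [Kset, smul_sum, smul_smul, mul_sum, sum_smul]
        rw [sum_comm]
        refine sum_congr rfl fun T _ => sum_congr rfl fun J _ => ?_
        congr 1
        ring

end
end QSymPaper
end

section
/- Let ν > 1 be an integer and n ≥ 1. For every J ⊆ [n−1], K_{comp(J)}(ν) = (1/(1−ν))^{|J|} ∑_{I ⊆ [n−1], I∩J = ∅} ((ν−1)/ν)^{(n−1)−|I|} M_{comp(I)}, as an identity of quasisymmetric functions over ℂ. -/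
namespace QSymPaper

attribute [local instance 0] Classical.propDecidable

noncomputable section

/-!
Expanding each `L_{comp(I)}` into monomials and exchanging the sums, the coefficient of
`M_{comp(T)}` is `ν^{-(n-1)} ∑_{I ⊆ T} (-1)^{|J∖I|} (ν-1)^{|[n-1]∖(I∪J)|}`. Each summand is
`∏_{s ∈ [n-1]∖I} w(s)` with `w = -1` on `J` and `w = ν-1` off `J`, so the sum factors as
`∏_{s ∉ T} w(s) · ∏_{s ∈ T} (1 + w(s))`. The second product vanishes as soon as `T` meets `J`,
and is `ν^{|T|}` otherwise.
-/

section PowersetSums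

variable {α : Type*} [DecidableEq α]

theorem sum_smul_sum_superset {R M : Type*} [Semiring R] [AddCommMonoid M] [Module R M]
    (C : Finset α) (a : Finset α → R) (f : Finset α → M) :
    ∑ I ∈ C.powerset, a I • ∑ T ∈ C.powerset.filter (fun T => I ⊆ T), f T =
      ∑ T ∈ C.powerset, (∑ I ∈ T.powerset, a I) • f T := by
  simp only [Finset.smul_sum, Finset.sum_smul]
  refine Finset.sum_comm' fun I T => ?_
  simp only [Finset.mem_powerset, Finset.mem_filter]
  exact ⟨fun ⟨_, hTC, hIT⟩ => ⟨hIT, hTC⟩, fun ⟨hIT, hTC⟩ => ⟨hIT.trans hTC, hTC, hIT⟩⟩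

theorem sum_powerset_prod_sdiff {R : Type*} [CommSemiring R] (w : α → R)
    {T C : Finset α} (hTC : T ⊆ C) :
    ∑ I ∈ T.powerset, ∏ s ∈ C \ I, w s = (∏ s ∈ C \ T, w s) * ∏ s ∈ T, (1 + w s) := by
  have hsplit : ∀ I ∈ T.powerset, ∏ s ∈ C \ I, w s = (∏ s ∈ C \ T, w s) * ∏ s ∈ T \ I, w s := by
    intro I hI
    rw [← Finset.prod_union (Finset.sdiff_disjoint.mono_right Finset.sdiff_subset),
      Finset.sdiff_union_sdiff_cancel hTC (Finset.mem_powerset.1 hI)]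
  rw [Finset.sum_congr rfl hsplit, ← Finset.mul_sum, Finset.prod_add]
  simp

theorem neg_one_pow_mul_pow_eq_prod_ite {F : Type*} [CommRing F] (x : F) {C J : Finset α}
    (hJC : J ⊆ C) (I : Finset α) :
    (-1 : F) ^ (J \ I).card * x ^ (C \ (I ∪ J)).card = ∏ s ∈ C \ I, if s ∈ J then -1 else x := by
  rw [Finset.prod_ite, Finset.prod_const, Finset.prod_const]
  congr 3 <;> ext s <;> simp only [Finset.mem_sdiff, Finset.mem_filter, Finset.mem_union]
  · exact ⟨fun ⟨hsJ, hsI⟩ => ⟨⟨hJC hsJ, hsI⟩, hsJ⟩, fun ⟨⟨_, hsI⟩, hsJ⟩ => ⟨hsJ, hsI⟩⟩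
  · tauto

theorem prod_one_add_ite {F : Type*} [CommRing F] (x : F) (T J : Finset α) :
    ∏ s ∈ T, (1 + if s ∈ J then -1 else x) = if T ∩ J = ∅ then (1 + x) ^ T.card else 0 := by
  split_ifs with hTJ
  · rw [← Finset.prod_const]
    refine Finset.prod_congr rfl fun s hsT => ?_
    rw [if_neg (Finset.disjoint_left.1 (Finset.disjoint_iff_inter_eq_empty.2 hTJ) hsT)]
  · obtain ⟨s, hs⟩ := Finset.nonempty_iff_ne_empty.2 hTJ
    rw [Finset.mem_inter] at hs
    exact Finset.prod_eq_zero hs.1 (by simp [hs.2])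

theorem coeff_Kset_monomial {F : Type*} [Field F] {ν : F} (hν0 : ν ≠ 0) (hν1 : ν ≠ 1)
    {C T J : Finset α} (hTC : T ⊆ C) (hJC : J ⊆ C) :
    ν ^ (-(C.card : ℤ)) *
        ∑ I ∈ T.powerset, (-1 : F) ^ (J \ I).card * (ν - 1) ^ (C \ (I ∪ J)).card =
      if T ∩ J = ∅ then (1 / (1 - ν)) ^ J.card * ((ν - 1) / ν) ^ (C.card - T.card) else 0 := by
  simp only [neg_one_pow_mul_pow_eq_prod_ite (ν - 1) hJC, sum_powerset_prod_sdiff _ hTC,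
    prod_one_add_ite, add_sub_cancel]
  split_ifs with hTJ
  swap
  · rw [mul_zero, mul_zero]
  have hdisj : Disjoint T J := Finset.disjoint_iff_inter_eq_empty.2 hTJ
  have hcard : T.card + J.card ≤ C.card := by
    rw [← Finset.card_union_of_disjoint hdisj]
    exact Finset.card_le_card (Finset.union_subset hTC hJC)
  obtain ⟨k, hk⟩ := Nat.exists_eq_add_of_le hcard
  rw [← neg_one_pow_mul_pow_eq_prod_ite (ν - 1) hJC, hdisj.symm.sdiff_eq_left,
    Finset.card_sdiff_of_subset (Finset.union_subset hTC hJC),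
    Finset.card_union_of_disjoint hdisj, hk,
    show T.card + J.card + k - T.card = J.card + k by omega,
    show T.card + J.card + k - (T.card + J.card) = k by omega]
  rw [zpow_neg, zpow_natCast, show 1 - ν = -(ν - 1) by ring, div_pow, div_pow, one_pow,
    neg_pow (ν - 1), pow_add, pow_add]
  have hsq : (-1 : F) ^ J.card * (-1) ^ J.card = 1 := by rw [← mul_pow]; norm_num
  generalize (-1 : F) ^ J.card = e at hsq ⊢
  have he : e ≠ 0 := left_ne_zero_of_mul_eq_one hsq
  field_simp
  linear_combination (ν - 1) ^ (J.card + k) * ν ^ (J.card + k) * hsq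

end PowersetSums

/-- expansion of `K_{comp(J)}(ν)` in the monomial basis. -/
theorem statement7 (ν : ℤ) (hν : 1 < ν) (n : ℕ) (hn : 1 ≤ n)
    (J : Finset ℕ) (hJ : J ⊆ Finset.Icc 1 (n - 1)) :
    Kset ℕ (fun _ => True) ν n J =
      ((1 / (1 - (ν : ℂ))) ^ J.card) •
        ∑ I ∈ (Finset.Icc 1 (n - 1)).powerset.filter (fun I => I ∩ J = ∅),
          ((((ν : ℂ) - 1) / (ν : ℂ)) ^ ((n - 1) - I.card)) •
            Mqs ℕ ℂ (fun _ => True) (compOf n I) := by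
  have hν0 : (ν : ℂ) ≠ 0 := by exact_mod_cast (by omega : ν ≠ 0)
  have hν1 : (ν : ℂ) ≠ 1 := by exact_mod_cast (by omega : ν ≠ 1)
  have hcard : ((Finset.Icc 1 (n - 1)).card : ℤ) = (n : ℤ) - 1 := by
    rw [Nat.card_Icc]; omega
  rw [Kset, ← hcard]
  simp only [Lqs]
  rw [sum_smul_sum_superset, Finset.smul_sum, Finset.smul_sum, Finset.sum_filter]
  refine Finset.sum_congr rfl fun T hT => ?_
  rw [smul_smul, coeff_Kset_monomial hν0 hν1 (Finset.mem_powerset.1 hT) hJ, Nat.card_Icc,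
    Nat.add_sub_cancel]
  split_ifs <;> simp only [mul_smul, zero_smul]

end
end QSymPaper
end

section
/- For every composition α of n: (a) D_α(1,0) = M_α; (b) D_α(−1,1) = (−1)^{n−ℓ(α)} ∑_{β ⪰ α} M_β (the dual elementary quasisymmetric function Λ*_α); (c) D_α(1,−1) = ∑_{β ⪰ α} M_β (Hoffman's essential quasisymmetric function E_α); (d) 2^n · D_α(2,−1) = η_α; (e) (q+1)^n · D_α(q+1,−1) = η_α^{(q)} as quasisymmetric functions over ℂ(q). -/
/-!
Expanding `D_α(q,t)` over the coarsenings `β ⪰ α`, indexed by the subsets `T ⊆ set(α)` with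
`ℓ(β) = |T| + 1`, each identity is a comparison of coefficients. At `t = 0` only `β = α`
survives; at `(q,t) = (−1,1)` the two signs combine to `(−1)^{n−ℓ(α)}` because
`ℓ(β) ≤ ℓ(α) ≤ n`; at `(1,−1)` every coefficient is `1`; and `c^n · c^{ℓ(β)−n} = c^{ℓ(β)}`
for every nonzero `c`.
-/

namespace QSymPaper

attribute [local instance 0] Classical.propDecidable

noncomputable section

section Composition

variable {α : List ℕ}

lemma IsComp.length_le_sum (hα : IsComp α) : α.length ≤ α.sum :=
  List.length_le_sum_of_one_le _ hα

lemma IsComp.strictMonoOn_sum_take (hα : IsComp α) :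
    StrictMonoOn (fun j => (α.take j).sum) (Set.Iic α.length) :=
  strictMonoOn_Iic_of_lt_succ fun j hj => by
    simpa [List.sum_take_succ _ _ hj] using hα _ (List.getElem_mem hj)

lemma zipWith_sub_sum_take (α : List ℕ) :
    List.zipWith (· - ·) ((List.range α.length).map fun j => (α.take (j + 1)).sum)
      ((List.range (α.length + 1)).map fun j => (α.take j).sum) = α := by
  refine List.ext_getElem (by simp) fun i _ h => ?_
  simp [List.sum_take_succ _ _ h]

lemma IsComp.sort_setComp (hα : IsComp α) :
    (setComp α).sort (· ≤ ·) = (List.range (α.length - 1)).map fun j => (α.take (j + 1)).sum := by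
  have hlt : ((List.range (α.length - 1)).map fun j => (α.take (j + 1)).sum).Pairwise (· < ·) :=
    List.pairwise_map.mpr <| List.pairwise_lt_range.imp_of_mem fun hi hj hij => by
      rw [List.mem_range] at hi hj
      exact hα.strictMonoOn_sum_take (by simp; omega) (by simp; omega) (by omega)
  have hset :
      setComp α = ((List.range (α.length - 1)).map fun j => (α.take (j + 1)).sum).toFinset := by
    ext; simp [setComp]
  rw [hset]
  exact (List.toFinset_sort _ hlt.nodup).mpr (hlt.imp le_of_lt)

lemma IsComp.card_setComp (hα : IsComp α) : (setComp α).card = α.length - 1 := by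
  rw [← Finset.length_sort (· ≤ ·), hα.sort_setComp, List.length_map, List.length_range]

lemma IsComp.compOf_setComp (hα : IsComp α) (hne : α ≠ []) : compOf α.sum (setComp α) = α := by
  have hlen : α.length - 1 + 1 = α.length := Nat.sub_add_cancel (List.length_pos_iff.mpr hne)
  have hsum : α.sum ≠ 0 := by
    have := hα.length_le_sum; omega
  have hsorted : (setComp α).sort (· ≤ ·) ++ [α.sum] =
      (List.range α.length).map fun j => (α.take (j + 1)).sum := by
    rw [hα.sort_setComp, ← hlen, List.range_succ, List.map_append, List.map_singleton, hlen,
      List.take_length]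
  simp only [compOf, if_neg hsum, hsorted]
  convert zipWith_sub_sum_take α using 2
  simp [List.range_succ_eq_map, Function.comp_def]

end Composition

section Specializations

variable {σ : Type} [LinearOrder σ] {P : σ → Prop}

lemma Mqs_nil (F : Type) [CommRing F] : Mqs σ F P [] = 1 := by
  ext d
  rw [MvPowerSeries.coeff_one]
  change (if _ then _ else _) = _
  refine if_congr ?_ rfl rfl
  rw [List.map_eq_nil_iff, ← List.length_eq_zero_iff, Finset.length_sort, Finset.card_eq_zero,
    Finsupp.support_eq_empty, and_iff_right_iff_imp]
  rintro rfl
  simp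

@[simp]
lemma setComp_nil : setComp [] = ∅ := rfl

lemma compOf_zero (S : Finset ℕ) : compOf 0 S = [] := if_pos rfl

variable {F : Type} [Field F] {α : List ℕ}

lemma IsComp.Dqt_one_zero (hα : IsComp α) : Dqt σ F P 1 0 α = Mqs σ F P α := by
  rcases eq_or_ne α [] with rfl | hne
  · exact (if_pos rfl).trans (Mqs_nil F).symm
  rw [Dqt, if_neg hne, Finset.sum_eq_single_of_mem _ (Finset.mem_powerset_self _),
    hα.card_setComp, hα.compOf_setComp hne]
  · simp [Nat.sub_add_cancel (List.length_pos_iff.mpr hne)]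
  · intro T hT hTne
    have : T.card < α.length - 1 := hα.card_setComp ▸
      Finset.card_lt_card (ssubset_of_subset_of_ne (Finset.mem_powerset.mp hT) hTne)
    simp [zero_pow (by omega : α.length - (T.card + 1) ≠ 0)]

lemma IsComp.Dqt_neg_one_one (hα : IsComp α) :
    Dqt σ F P (-1) 1 α = ((-1 : F) ^ (α.sum - α.length)) •
      ∑ T ∈ (setComp α).powerset, Mqs σ F P (compOf α.sum T) := by
  rcases eq_or_ne α [] with rfl | hne
  · simp [Dqt, compOf_zero, Mqs_nil]
  rw [Dqt, if_neg hne, Finset.smul_sum]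
  refine Finset.sum_congr rfl fun T hT => congrArg (· • _) ?_
  have hT : T.card + 1 ≤ α.length := by
    have := Finset.card_le_card (Finset.mem_powerset.mp hT)
    rw [hα.card_setComp] at this
    have := List.length_pos_iff.mpr hne
    omega
  have hexp : (T.card + 1 : ℤ) - α.sum = -((α.sum - (T.card + 1) : ℕ) : ℤ) := by
    have := hα.length_le_sum
    omega
  have hpar : α.sum - (T.card + 1) + (α.length - (T.card + 1)) =
      α.sum - α.length + 2 * (α.length - (T.card + 1)) := by
    have := hα.length_le_sum
    omega
  rw [hexp, zpow_neg, zpow_natCast, ← inv_pow, inv_neg, inv_one, ← pow_add, hpar, pow_add,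
    pow_mul, neg_one_sq, one_pow, mul_one]

lemma Dqt_one_neg_one (α : List ℕ) :
    Dqt σ F P 1 (-1) α = ∑ T ∈ (setComp α).powerset, Mqs σ F P (compOf α.sum T) := by
  rcases eq_or_ne α [] with rfl | hne
  · simp [Dqt, compOf_zero, Mqs_nil]
  · simp [Dqt, hne]

lemma pow_sum_smul_Dqt_neg_one {c : F} (hc : c ≠ 0) (α : List ℕ) :
    c ^ α.sum • Dqt σ F P c (-1) α = etaQ σ F P c α := by
  rcases eq_or_ne α [] with rfl | hne
  · simp [Dqt, etaQ]
  rw [Dqt, etaQ, if_neg hne, if_neg hne, Finset.smul_sum]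
  refine Finset.sum_congr rfl fun T _ => ?_
  rw [smul_smul, neg_neg, one_pow, mul_one, ← zpow_natCast, ← zpow_add₀ hc, ← zpow_natCast]
  push_cast
  ring_nf

end Specializations

/-- specializations of `D_α(q,t)`:
(a) `D_α(1,0) = M_α`; (b) `D_α(−1,1) = Λ*_α`; (c) `D_α(1,−1) = E_α`;
(d) `2^n D_α(2,−1) = η_α`; (e) `(q+1)^n D_α(q+1,−1) = η_α^{(q)}`. -/
theorem statement8 (α : List ℕ) (hα : IsComp α) :
    Dqt ℕ ℂ (fun _ => True) 1 0 α = Mqs ℕ ℂ (fun _ => True) α ∧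
    Dqt ℕ ℂ (fun _ => True) (-1) 1 α =
      ((-1 : ℂ) ^ (α.sum - α.length)) •
        ∑ T ∈ (setComp α).powerset, Mqs ℕ ℂ (fun _ => True) (compOf α.sum T) ∧
    Dqt ℕ ℂ (fun _ => True) 1 (-1) α =
      ∑ T ∈ (setComp α).powerset, Mqs ℕ ℂ (fun _ => True) (compOf α.sum T) ∧
    ((2 : ℂ) ^ α.sum) • Dqt ℕ ℂ (fun _ => True) 2 (-1) α =
      etaQ ℕ ℂ (fun _ => True) 2 α ∧
    ((RatFunc.X + 1 : RatFunc ℂ) ^ α.sum) •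
        Dqt ℕ (RatFunc ℂ) (fun _ => True) (RatFunc.X + 1) (-1) α =
      etaQ ℕ (RatFunc ℂ) (fun _ => True) (RatFunc.X + 1) α := by
  have hX : (RatFunc.X + 1 : RatFunc ℂ) ≠ 0 := by
    simpa using RatFunc.algebraMap_ne_zero (K := ℂ) (Polynomial.X_add_C_ne_zero 1)
  exact ⟨hα.Dqt_one_zero, hα.Dqt_neg_one_one, Dqt_one_neg_one α,
    pow_sum_smul_Dqt_neg_one two_ne_zero α, pow_sum_smul_Dqt_neg_one hX α⟩

end
end QSymPaper
end

section
/- For every composition γ, D_γ(q,t)(x,y) = ∑_{(α,β) : α·β = γ} D_α(q,t)(x) · D_β(q,t)(y), where the sum is over all pairs of (possibly empty) compositions whose concatenation is γ. (This is the two-alphabet form of the coproduct rule △D_γ(q,t) = ∑_{α·β=γ} D_α(q,t) ⊗ D_β(q,t).) -/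
/-!
In the monomial basis, `D_γ(q,t) = ∑_{w ⪰ γ} q^{ℓ(w)-n} (-t)^{ℓ(γ)-ℓ(w)} M_w`, and `w ⪰ γ` says
that the partial sums of `w` are partial sums of `γ` and both have the same total. A monomial
of the combined alphabet is `x^{d'} y^{d''}`, and its exponent word is the concatenation `u · v`
of those of `x^{d'}` and `y^{d''}`. If `u · v ⪰ γ`, then `|u|` is a partial sum of `γ`, so `γ`
splits uniquely as `α · β` with `|α| = |u|`, and then `u ⪰ α`, `v ⪰ β`. Lengths and sizes are
additive under concatenation, so the coefficient of `x^{d'} y^{d''}` on the left is the product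
of the coefficients of `x^{d'}` in `D_α` and of `y^{d''}` in `D_β`, the only nonzero term on the
right.
-/

namespace QSymPaper

attribute [local instance 0] Classical.propDecidable

noncomputable section

section Compositions

open Finset

lemma IsComp.take {γ : List ℕ} (hγ : IsComp γ) (j : ℕ) : IsComp (γ.take j) :=
  fun a ha => hγ a (List.mem_of_mem_take ha)

lemma IsComp.drop {γ : List ℕ} (hγ : IsComp γ) (j : ℕ) : IsComp (γ.drop j) :=
  fun a ha => hγ a (List.mem_of_mem_drop ha)

lemma IsComp.sum_pos {w : List ℕ} (hw : IsComp w) (hne : w ≠ []) : 0 < w.sum := by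
  obtain ⟨a, l, rfl⟩ := List.exists_cons_of_ne_nil hne
  simpa using Nat.add_pos_left (hw a List.mem_cons_self) l.sum

lemma IsComp.strictMonoOn_sum_take_s11 {w : List ℕ} (hw : IsComp w) :
    StrictMonoOn (fun i => (w.take i).sum) (Set.Iic w.length) := by
  intro i _ i' hi' hii'
  have hi : i < w.length := lt_of_lt_of_le hii' hi'
  calc (w.take i).sum < (w.take (i + 1)).sum := by
        rw [List.sum_take_succ w i hi]
        exact Nat.lt_add_of_pos_right (hw _ (List.getElem_mem hi))
    _ ≤ (w.take i').sum := List.monotone_sum_take w hii'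

lemma mem_setComp {w : List ℕ} {x : ℕ} :
    x ∈ setComp w ↔ ∃ i < w.length - 1, (w.take (i + 1)).sum = x := by
  simp [setComp]

lemma IsComp.pos_of_mem_setComp {w : List ℕ} (hw : IsComp w) {x : ℕ} (hx : x ∈ setComp w) :
    0 < x := by
  obtain ⟨i, hi, rfl⟩ := mem_setComp.mp hx
  simpa using hw.strictMonoOn_sum_take_s11 (by simp) (by simp; omega : i + 1 ∈ Set.Iic w.length)
    (Nat.succ_pos i)

lemma IsComp.lt_sum_of_mem_setComp {w : List ℕ} (hw : IsComp w) {x : ℕ} (hx : x ∈ setComp w) :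
    x < w.sum := by
  obtain ⟨i, hi, rfl⟩ := mem_setComp.mp hx
  simpa using hw.strictMonoOn_sum_take_s11 (by simp; omega : i + 1 ∈ Set.Iic w.length)
    (by simp : w.length ∈ Set.Iic w.length) (by omega)

lemma IsComp.setComp_subset_Icc {w : List ℕ} (hw : IsComp w) :
    setComp w ⊆ Icc 1 (w.sum - 1) := fun _ hx =>
  mem_Icc.mpr ⟨hw.pos_of_mem_setComp hx, Nat.le_sub_one_of_lt (hw.lt_sum_of_mem_setComp hx)⟩

lemma IsComp.card_setComp_s11 {w : List ℕ} (hw : IsComp w) : (setComp w).card = w.length - 1 := by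
  rw [setComp, card_image_of_injOn, card_range]
  intro i hi i' hi' h
  simpa using hw.strictMonoOn_sum_take_s11.injOn (by simp at hi ⊢; omega : i + 1 ∈ Set.Iic _)
    (by simp at hi' ⊢; omega : i' + 1 ∈ Set.Iic _) h

lemma setComp_singleton (a : ℕ) : setComp [a] = ∅ := rfl

lemma setComp_append_singleton {w : List ℕ} (hw : w ≠ []) (a : ℕ) :
    setComp (w ++ [a]) = insert w.sum (setComp w) := by
  obtain ⟨m, hm⟩ : ∃ m, w.length = m + 1 := Nat.exists_eq_succ_of_ne_zero (by simpa using hw)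
  have htake : ∀ i ≤ w.length, ((w ++ [a]).take i).sum = (w.take i).sum := fun i hi => by
    rw [List.take_append_of_le_length hi]
  simp only [setComp, List.length_append, List.length_singleton, hm, Nat.add_sub_cancel,
    range_add_one, image_insert]
  rw [htake _ (by omega), ← hm, List.take_length]
  congr 1
  exact image_congr fun i hi => htake _ (by simp at hi; omega)

lemma compOf_empty {n : ℕ} (hn : n ≠ 0) : compOf n ∅ = [n] := by
  simp [compOf, hn]

lemma zipWith_sub_append_pair (p a b : ℕ) (l : List ℕ) :
    List.zipWith (· - ·) (l ++ [a, b]) (p :: (l ++ [a, b]))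
      = List.zipWith (· - ·) (l ++ [a]) (p :: (l ++ [a])) ++ [b - a] := by
  induction l generalizing p with
  | nil => rfl
  | cons c l ih => simp only [List.cons_append, List.zipWith_cons_cons, ih]

lemma compOf_insert_of_forall_lt {n s : ℕ} {T : Finset ℕ} (hs : 0 < s) (hsn : s < n)
    (hT : ∀ x ∈ T, x < s) : compOf n (insert s T) = compOf s T ++ [n - s] := by
  have hsort : (insert s T).sort (· ≤ ·) = T.sort (· ≤ ·) ++ [s] := by
    have hnd : (T.sort (· ≤ ·) ++ [s]).Nodup :=
      List.nodup_append.mpr ⟨sort_nodup _ _, List.nodup_singleton s,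
        fun x hx y hy => by simp at hx hy; exact (hT x hx).ne.trans_eq hy.symm⟩
    have hpw : (T.sort (· ≤ ·) ++ [s]).Pairwise (· ≤ ·) :=
      List.pairwise_append.mpr ⟨pairwise_sort _ _, List.pairwise_singleton _ s,
        fun x hx y hy => by simp at hx hy; exact hy ▸ (hT x hx).le⟩
    rw [← (List.toFinset_sort (· ≤ ·) hnd).mpr hpw]
    congr 1
    ext x
    simp
  rw [compOf, compOf, if_neg (by omega), if_neg (by omega), hsort]
  simp only [List.append_assoc, List.cons_append, List.nil_append]
  exact zipWith_sub_append_pair 0 s n _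

lemma sum_compOf_and_setComp_compOf {n : ℕ} {T : Finset ℕ} (hn : 0 < n)
    (hT : T ⊆ Icc 1 (n - 1)) : (compOf n T).sum = n ∧ setComp (compOf n T) = T := by
  induction T using Finset.induction_on_max generalizing n with
  | empty => simp [compOf_empty hn.ne', setComp_singleton]
  | insert s T hlt ih =>
    have hs := mem_Icc.mp (hT (mem_insert_self s T))
    obtain ⟨hsum, hset⟩ := ih (n := s) (by omega) fun x hx =>
      mem_Icc.mpr ⟨(mem_Icc.mp (hT (mem_insert_of_mem hx))).1, Nat.le_sub_one_of_lt (hlt x hx)⟩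
    have hne : compOf s T ≠ [] := by rintro h; simp [h] at hsum; omega
    rw [compOf_insert_of_forall_lt (by omega) (by omega) hlt, List.sum_append,
      setComp_append_singleton hne, hsum, hset]
    exact ⟨by simp; omega, rfl⟩

lemma IsComp.compOf_setComp_s11 {w : List ℕ} (hw : IsComp w) (hne : w ≠ []) :
    compOf w.sum (setComp w) = w := by
  induction w using List.reverseRecOn with
  | nil => exact absurd rfl hne
  | append_singleton l a ih =>
    have ha : 0 < a := hw a (by simp)
    rcases eq_or_ne l [] with rfl | hl
    · simp [setComp_singleton, compOf_empty ha.ne']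
    have hlc : IsComp l := fun x hx => hw x (by simp [hx])
    rw [setComp_append_singleton hl, List.sum_append, List.sum_singleton,
      compOf_insert_of_forall_lt (hlc.sum_pos hl) (by omega) fun x hx =>
        hlc.lt_sum_of_mem_setComp hx, ih hlc hl, Nat.add_sub_cancel_left]

lemma IsComp.eq_compOf_iff {w : List ℕ} (hw : IsComp w) {n : ℕ} (hn : 0 < n) {T : Finset ℕ}
    (hT : T ⊆ Icc 1 (n - 1)) : w = compOf n T ↔ w.sum = n ∧ setComp w = T := by
  constructor
  · rintro rfl
    exact sum_compOf_and_setComp_compOf hn hT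
  · rintro ⟨rfl, rfl⟩
    exact (hw.compOf_setComp_s11 (by rintro rfl; simp at hn)).symm

end Compositions

section Coarsening

open Finset

def partialSums (w : List ℕ) : Finset ℕ :=
  (range (w.length + 1)).image fun j => (w.take j).sum

lemma mem_partialSums {w : List ℕ} {x : ℕ} :
    x ∈ partialSums w ↔ ∃ j ≤ w.length, (w.take j).sum = x := by
  simp [partialSums]

lemma zero_mem_partialSums (w : List ℕ) : 0 ∈ partialSums w :=
  mem_partialSums.mpr ⟨0, Nat.zero_le _, by simp⟩

lemma sum_mem_partialSums (w : List ℕ) : w.sum ∈ partialSums w :=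
  mem_partialSums.mpr ⟨w.length, le_rfl, by simp⟩

lemma le_sum_of_mem_partialSums {w : List ℕ} {x : ℕ} (hx : x ∈ partialSums w) : x ≤ w.sum := by
  obtain ⟨j, -, rfl⟩ := mem_partialSums.mp hx
  exact (List.take_sublist j w).sum_le_sum fun _ _ => Nat.zero_le _

lemma partialSums_append (u v : List ℕ) :
    partialSums (u ++ v) = partialSums u ∪ (partialSums v).image (u.sum + ·) := by
  have htake : ∀ j, ((u ++ v).take j).sum = (u.take j).sum + (v.take (j - u.length)).sum :=
    fun j => by rw [List.take_append, List.sum_append]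
  ext x
  simp only [mem_union, mem_image, mem_partialSums, List.length_append]
  constructor
  · rintro ⟨j, hj, rfl⟩
    rcases le_or_gt j u.length with h | h
    · exact Or.inl ⟨j, h, by simp [htake, Nat.sub_eq_zero_of_le h]⟩
    · refine Or.inr ⟨_, ⟨j - u.length, by omega, rfl⟩, ?_⟩
      rw [htake, List.take_of_length_le h.le]
  · rintro (⟨j, hj, rfl⟩ | ⟨_, ⟨j, hj, rfl⟩, rfl⟩)
    · exact ⟨j, by omega, by simp [htake, Nat.sub_eq_zero_of_le hj]⟩
    · exact ⟨u.length + j, by omega, by rw [htake, List.take_of_length_le (by omega)]; simp⟩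

lemma IsComp.card_partialSums {w : List ℕ} (hw : IsComp w) :
    (partialSums w).card = w.length + 1 := by
  rw [partialSums, card_image_of_injOn, card_range]
  exact hw.strictMonoOn_sum_take_s11.injOn.mono fun i hi => by simp at hi ⊢; omega

lemma partialSums_eq_insert_setComp (w : List ℕ) :
    partialSums w = insert 0 (insert w.sum (setComp w)) := by
  ext x
  simp only [mem_insert, mem_partialSums, mem_setComp]
  constructor
  · rintro ⟨j, hj, rfl⟩
    rcases Nat.eq_zero_or_pos j with rfl | hj0
    · simp
    rcases hj.eq_or_lt with rfl | hjl
    · simp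
    exact Or.inr (Or.inr ⟨j - 1, by omega, by rw [Nat.sub_add_cancel hj0]⟩)
  · rintro (rfl | rfl | ⟨i, hi, rfl⟩)
    exacts [⟨0, by simp⟩, ⟨w.length, le_rfl, by simp⟩, ⟨i + 1, by omega, rfl⟩]

lemma IsComp.setComp_subset_iff {w γ : List ℕ} (hw : IsComp w)
    (hsum : w.sum = γ.sum) : setComp w ⊆ setComp γ ↔ partialSums w ⊆ partialSums γ := by
  rw [partialSums_eq_insert_setComp w, partialSums_eq_insert_setComp γ, hsum]
  refine ⟨fun h => insert_subset_insert _ (insert_subset_insert _ h), fun h x hx => ?_⟩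
  have hx0 := hw.pos_of_mem_setComp hx
  have hxn := hw.lt_sum_of_mem_setComp hx
  rcases mem_insert.mp (h (mem_insert_of_mem (mem_insert_of_mem hx))) with h0 | hmem
  · omega
  rcases mem_insert.mp hmem with hn | hx'
  exacts [by omega, hx']

lemma IsComp.length_le_of_partialSums_subset {u w : List ℕ} (hu : IsComp u)
    (h : partialSums u ⊆ partialSums w) : u.length ≤ w.length := by
  have := (card_le_card h).trans (card_image_le.trans_eq (card_range _))
  rw [hu.card_partialSums] at this
  omega

lemma partialSums_append_subset_iff {u v A B : List ℕ} (h : u.sum = A.sum) :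
    partialSums (u ++ v) ⊆ partialSums (A ++ B) ↔
      partialSums u ⊆ partialSums A ∧ partialSums v ⊆ partialSums B := by
  rw [partialSums_append, partialSums_append, h, union_subset_iff]
  refine and_congr ⟨fun hu x hx => ?_, fun hu => hu.trans subset_union_left⟩
    ⟨fun hv y hy => ?_, fun hv => (image_subset_image hv).trans subset_union_right⟩
  · rcases mem_union.mp (hu hx) with hA | hB
    · exact hA
    obtain ⟨y, -, rfl⟩ := mem_image.mp hB
    have : A.sum + y ≤ A.sum := (le_sum_of_mem_partialSums hx).trans_eq h
    rw [show y = 0 by omega, add_zero]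
    exact sum_mem_partialSums A
  · rcases mem_union.mp (hv (mem_image_of_mem _ hy)) with hA | hB
    · rw [show y = 0 by have := le_sum_of_mem_partialSums hA; omega]
      exact zero_mem_partialSums B
    · obtain ⟨z, hz, hzy⟩ := mem_image.mp hB
      exact (Nat.add_left_cancel hzy) ▸ hz

variable {F : Type} [Field F]

/-- The coefficient of `M_w` in `D_γ(q,t)`; `w ⪰ γ` is detected by the partial sums. -/
def coarseningCoeff (q t : F) (γ w : List ℕ) : F :=
  if w.sum = γ.sum ∧ partialSums w ⊆ partialSums γ then
    q ^ ((w.length : ℤ) - γ.sum) * (-t) ^ (γ.length - w.length)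
  else 0

lemma coarseningCoeff_append {q : F} (hq : q ≠ 0) (t : F) {u v A B : List ℕ}
    (hu : IsComp u) (hv : IsComp v) (h : u.sum = A.sum) :
    coarseningCoeff q t (A ++ B) (u ++ v) = coarseningCoeff q t A u * coarseningCoeff q t B v := by
  have hcond : ((u ++ v).sum = (A ++ B).sum ∧ partialSums (u ++ v) ⊆ partialSums (A ++ B)) ↔
      (u.sum = A.sum ∧ partialSums u ⊆ partialSums A) ∧
        (v.sum = B.sum ∧ partialSums v ⊆ partialSums B) := by
    rw [partialSums_append_subset_iff h, List.sum_append, List.sum_append, h,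
      Nat.add_left_cancel_iff]
    tauto
  unfold coarseningCoeff
  by_cases hc : (u.sum = A.sum ∧ partialSums u ⊆ partialSums A) ∧
      (v.sum = B.sum ∧ partialSums v ⊆ partialSums B)
  · obtain ⟨⟨hsu, hpu⟩, hsv, hpv⟩ := hc
    have hlu := hu.length_le_of_partialSums_subset hpu
    have hlv := hv.length_le_of_partialSums_subset hpv
    rw [if_pos (hcond.mpr ⟨⟨hsu, hpu⟩, hsv, hpv⟩), if_pos ⟨hsu, hpu⟩, if_pos ⟨hsv, hpv⟩,
      mul_mul_mul_comm, ← zpow_add₀ hq, ← pow_add]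
    congr 2
    · simp only [List.length_append, List.sum_append]
      push_cast
      ring
    · simp only [List.length_append]
      omega
  · rw [if_neg (mt hcond.mp hc)]
    rcases not_and_or.mp hc with hc | hc
    · rw [if_neg hc, zero_mul]
    · rw [if_neg hc, mul_zero]

lemma IsComp.coarseningCoeff_nil (q t : F) {w : List ℕ} (hw : IsComp w) :
    coarseningCoeff q t [] w = if w = [] then 1 else 0 := by
  rcases eq_or_ne w [] with rfl | hne
  · simp [coarseningCoeff, partialSums]
  · rw [if_neg hne, coarseningCoeff, if_neg fun h => (hw.sum_pos hne).ne' h.1]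

lemma IsComp.coarseningCoeff_append_eq_sum {q : F} (hq : q ≠ 0) (t : F) {γ u v : List ℕ}
    (hγ : IsComp γ) (hu : IsComp u) (hv : IsComp v) :
    coarseningCoeff q t γ (u ++ v) =
      ∑ j ∈ range (γ.length + 1),
        coarseningCoeff q t (γ.take j) u * coarseningCoeff q t (γ.drop j) v := by
  have hvanish : ∀ j, (γ.take j).sum ≠ u.sum →
      coarseningCoeff q t (γ.take j) u * coarseningCoeff q t (γ.drop j) v = 0 := fun j hj => by
    rw [coarseningCoeff, if_neg fun hc => hj hc.1.symm, zero_mul]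
  by_cases hs : ∃ j ≤ γ.length, (γ.take j).sum = u.sum
  · obtain ⟨j, hj, hsum⟩ := hs
    rw [sum_eq_single_of_mem j (mem_range.mpr (Nat.lt_succ_of_le hj)), ← coarseningCoeff_append hq t hu hv hsum.symm, List.take_append_drop]
    intro i hi hij
    refine hvanish i fun h => hij ?_
    exact hγ.strictMonoOn_sum_take_s11.injOn (by simpa [Nat.lt_succ_iff] using hi) hj (h.trans hsum.symm)
  · rw [sum_eq_zero fun j hj => hvanish j fun h => hs ⟨j, Nat.le_of_lt_succ (mem_range.mp hj), h⟩,
      coarseningCoeff, if_neg]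
    rintro ⟨-, hsub⟩
    exact hs (mem_partialSums.mp
      (hsub (partialSums_append u v ▸ mem_union_left _ (sum_mem_partialSums u))))

end Coarsening

section PowerSeries

open Finset MvPowerSeries

variable {σ : Type} [LinearOrder σ]

def expWord (d : σ →₀ ℕ) : List ℕ := (d.support.sort (· ≤ ·)).map fun i => d i

lemma isComp_expWord (d : σ →₀ ℕ) : IsComp (expWord d) := by
  intro a ha
  obtain ⟨i, hi, rfl⟩ := List.mem_map.mp ha
  exact Nat.pos_of_ne_zero (Finsupp.mem_support_iff.mp ((mem_sort _).mp hi))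

lemma expWord_eq_nil_iff {d : σ →₀ ℕ} : expWord d = [] ↔ d = 0 := by
  rw [expWord, List.map_eq_nil_iff, ← List.length_eq_zero_iff, length_sort, card_eq_zero,
    Finsupp.support_eq_empty]

lemma coeff_Mqs {F : Type} [CommRing F] (P : σ → Prop) (α : List ℕ) (d : σ →₀ ℕ) :
    coeff d (Mqs σ F P α) = if (∀ i ∈ d.support, P i) ∧ expWord d = α then 1 else 0 :=
  rfl

lemma IsComp.coeff_sum_smul_Mqs_compOf {F : Type} [CommRing F] (P : σ → Prop) {γ : List ℕ}
    (hγ : IsComp γ) (hne : γ ≠ []) (c : Finset ℕ → F) (d : σ →₀ ℕ) :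
    coeff d (∑ T ∈ (setComp γ).powerset, c T • Mqs σ F P (compOf γ.sum T)) =
      if setComp (expWord d) ⊆ setComp γ ∧ (∀ i ∈ d.support, P i) ∧ (expWord d).sum = γ.sum
      then c (setComp (expWord d)) else 0 := by
  have hw := isComp_expWord d
  calc coeff d (∑ T ∈ (setComp γ).powerset, c T • Mqs σ F P (compOf γ.sum T))
      = ∑ T ∈ (setComp γ).powerset, if setComp (expWord d) = T then
          (if (∀ i ∈ d.support, P i) ∧ (expWord d).sum = γ.sum then c T else 0) else 0 := by
        rw [map_sum]
        refine sum_congr rfl fun T hT => ?_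
        simp only [coeff_smul, coeff_Mqs, hw.eq_compOf_iff (hγ.sum_pos hne)
          ((mem_powerset.mp hT).trans hγ.setComp_subset_Icc)]
        by_cases hT : setComp (expWord d) = T <;> simp [hT]
    _ = _ := by
        rw [sum_ite_eq]
        exact (if_congr mem_powerset rfl rfl).trans (ite_and _ _ _ _).symm

lemma coeff_Dqt {F : Type} [Field F] (P : σ → Prop) (q t : F) {γ : List ℕ} (hγ : IsComp γ)
    (d : σ →₀ ℕ) :
    coeff d (Dqt σ F P q t γ) =
      if ∀ i ∈ d.support, P i then coarseningCoeff q t γ (expWord d) else 0 := by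
  have hw := isComp_expWord d
  rcases eq_or_ne γ [] with rfl | hne
  · rw [Dqt, if_pos rfl, coeff_one, hw.coarseningCoeff_nil]
    by_cases hd : d = 0
    · simp [hd, expWord]
    · simp only [hd, expWord_eq_nil_iff, if_false, ite_self]
  rw [Dqt, if_neg hne, hγ.coeff_sum_smul_Mqs_compOf P hne, coarseningCoeff, ← ite_and]
  refine ite_congr (propext ⟨fun ⟨hsub, hP, hs⟩ => ⟨hP, hs, (hw.setComp_subset_iff hs).mp hsub⟩,
    fun ⟨hP, hs, hsub⟩ => ⟨(hw.setComp_subset_iff hs).mpr hsub, hP, hs⟩⟩) (fun ⟨_, hs, _⟩ => ?_)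
    fun _ => rfl
  have hwne : expWord d ≠ [] := fun h => (hγ.sum_pos hne).ne' (by rw [← hs, h, List.sum_nil])
  have hlen : (setComp (expWord d)).card + 1 = (expWord d).length := by
    have := List.length_pos_iff.mpr hwne
    rw [hw.card_setComp_s11]
    omega
  rw [← hlen, Nat.cast_succ]

end PowerSeries

section TwoAlphabets

open Finset MvPowerSeries

variable {σ : Type} {p : σ → Prop}

lemma coeff_mul_eq_coeff_filter_mul {F : Type} [CommRing F] {f g : MvPowerSeries σ F}
    (hf : ∀ d, ¬ (∀ i ∈ d.support, p i) → coeff d f = 0)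
    (hg : ∀ d, ¬ (∀ i ∈ d.support, ¬ p i) → coeff d g = 0) (d : σ →₀ ℕ) :
    coeff d (f * g) = coeff (d.filter p) f * coeff (d.filter (¬ p ·)) g := by
  rw [coeff_mul]
  refine sum_eq_single_of_mem (d.filter p, d.filter (¬ p ·))
    (HasAntidiagonal.mem_antidiagonal.mpr (Finsupp.filter_add_filter_not d p)) ?_
  rintro ⟨d₁, d₂⟩ hd hne
  rw [HasAntidiagonal.mem_antidiagonal] at hd
  by_cases h₁ : ∀ i ∈ d₁.support, p i
  · by_cases h₂ : ∀ i ∈ d₂.support, ¬ p i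
    · refine absurd ?_ hne
      have hd₁ : d₁.filter p = d₁ := (Finsupp.filter_eq_self_iff _ _).mpr fun i hi =>
        h₁ i (Finsupp.mem_support_iff.mpr hi)
      have hd₂ : d₂.filter p = 0 := (Finsupp.filter_eq_zero_iff _ _).mpr fun i hi => by
        by_contra h
        exact h₂ i (Finsupp.mem_support_iff.mpr h) hi
      have hd₁' : d₁.filter (¬ p ·) = 0 := (Finsupp.filter_eq_zero_iff _ _).mpr fun i hi => by
        by_contra h
        exact hi (h₁ i (Finsupp.mem_support_iff.mpr h))
      have hd₂' : d₂.filter (¬ p ·) = d₂ := (Finsupp.filter_eq_self_iff _ _).mpr fun i hi =>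
        h₂ i (Finsupp.mem_support_iff.mpr hi)
      rw [← hd, Finsupp.filter_add, Finsupp.filter_add, hd₁, hd₂, hd₁', hd₂', add_zero, zero_add]
    · rw [hg _ h₂, mul_zero]
  · rw [hf _ h₁, zero_mul]

variable [LinearOrder σ]

lemma expWord_eq_append (hp : ∀ a b, a ≤ b → p b → p a) (d : σ →₀ ℕ) :
    expWord d = expWord (d.filter p) ++ expWord (d.filter (¬ p ·)) := by
  have hsort : d.support.sort (· ≤ ·) =
      (d.filter p).support.sort (· ≤ ·) ++ (d.filter (¬ p ·)).support.sort (· ≤ ·) := by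
    have hnd : ((d.filter p).support.sort (· ≤ ·) ++
        (d.filter (¬ p ·)).support.sort (· ≤ ·)).Nodup :=
      List.nodup_append.mpr ⟨sort_nodup _ _, sort_nodup _ _, fun a ha b hb hab => by
        simp only [mem_sort, Finsupp.support_filter, mem_filter] at ha hb
        exact hb.2 (hab ▸ ha.2)⟩
    have hpw : ((d.filter p).support.sort (· ≤ ·) ++
        (d.filter (¬ p ·)).support.sort (· ≤ ·)).Pairwise (· ≤ ·) :=
      List.pairwise_append.mpr ⟨pairwise_sort _ _, pairwise_sort _ _, fun a ha b hb => by
        simp only [mem_sort, Finsupp.support_filter, mem_filter] at ha hb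
        exact le_of_not_ge fun hba => hb.2 (hp b a hba ha.2)⟩
    rw [← (List.toFinset_sort (· ≤ ·) hnd).mpr hpw]
    congr 1
    ext i
    simp only [Finsupp.support_filter, List.mem_toFinset, List.mem_append, mem_sort, mem_filter]
    tauto
  rw [expWord, hsort, List.map_append]
  congr 1 <;> refine List.map_congr_left fun i hi => ?_
  · rw [mem_sort, Finsupp.support_filter, mem_filter] at hi
    exact (Finsupp.filter_apply_pos _ d hi.2).symm
  · rw [mem_sort, Finsupp.support_filter, mem_filter] at hi
    exact (Finsupp.filter_apply_pos _ d hi.2).symm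

end TwoAlphabets

lemma PLft_of_le {a b : Sig2} (hab : a ≤ b) (hb : PLft b) : PLft a := by
  rcases a with x | x <;> rcases b with y | y
  · rfl
  · exact absurd hb Bool.false_ne_true
  · exact absurd hab (Sum.Lex.not_inr_le_inl)
  · exact absurd hb Bool.false_ne_true

lemma PRgt_iff_not_PLft (s : Sig2) : PRgt s ↔ ¬ PLft s := by
  rcases s with x | x <;> simp [PLft, PRgt]

lemma qv_ne_zero : qv ≠ 0 := by
  rw [qv, Ne, map_eq_zero_iff _ (IsFractionRing.injective _ _)]
  exact MvPolynomial.X_ne_zero 0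

lemma IsComp.finsum_append_eq_sum {M : Type} [AddCommMonoid M] {γ : List ℕ} (hγ : IsComp γ)
    (f : List ℕ × List ℕ → M) :
    ∑ᶠ (p : List ℕ × List ℕ) (_ : IsComp p.1 ∧ IsComp p.2 ∧ p.1 ++ p.2 = γ), f p =
      ∑ j ∈ Finset.range (γ.length + 1), f (γ.take j, γ.drop j) := by
  have hset : {p : List ℕ × List ℕ | IsComp p.1 ∧ IsComp p.2 ∧ p.1 ++ p.2 = γ} =
      ((Finset.range (γ.length + 1)).image fun j => (γ.take j, γ.drop j) : Set _) := by
    ext ⟨u, v⟩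
    simp only [Set.mem_ofPred_eq, Finset.coe_image, Finset.coe_range, Set.mem_image,
      Set.mem_Iio, Prod.mk.injEq]
    constructor
    · rintro ⟨-, -, rfl⟩
      exact ⟨u.length, by simp, List.take_left, List.drop_left⟩
    · rintro ⟨j, -, rfl, rfl⟩
      exact ⟨hγ.take j, hγ.drop j, List.take_append_drop j γ⟩
  have hinj : Set.InjOn (fun j => (γ.take j, γ.drop j)) ↑(Finset.range (γ.length + 1)) :=
    fun i hi j hj h => by
      have := congrArg (fun p : List ℕ × List ℕ => p.1.length) h
      simp only [Finset.coe_range, Set.mem_Iio] at hi hj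
      simp at this
      omega
  change ∑ᶠ p ∈ {p : List ℕ × List ℕ | IsComp p.1 ∧ IsComp p.2 ∧ p.1 ++ p.2 = γ}, f p = _
  rw [hset, finsum_mem_coe_finset, Finset.sum_image hinj]

lemma coeff_Dqt_mul_Dqt {F : Type} [Field F] (q t : F) {α β : List ℕ} (hα : IsComp α)
    (hβ : IsComp β) (d : Sig2 →₀ ℕ) :
    MvPowerSeries.coeff d (Dqt Sig2 F PLft q t α * Dqt Sig2 F PRgt q t β) =
      coarseningCoeff q t α (expWord (d.filter PLft)) *
        coarseningCoeff q t β (expWord (d.filter (¬ PLft ·))) := by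
  have hLft : ∀ i ∈ (d.filter PLft).support, PLft i := fun i hi => (Finset.mem_filter.mp hi).2
  have hRgt : ∀ i ∈ (d.filter (¬ PLft ·)).support, PRgt i := fun i hi =>
    (PRgt_iff_not_PLft i).mpr (Finset.mem_filter.mp hi).2
  rw [coeff_mul_eq_coeff_filter_mul (p := PLft)
      (fun d h => by rw [coeff_Dqt _ _ _ hα, if_neg h])
      (fun d h => by
        rw [coeff_Dqt _ _ _ hβ, if_neg fun h' => h fun i hi => (PRgt_iff_not_PLft i).mp (h' i hi)]),
    coeff_Dqt _ _ _ hα, coeff_Dqt _ _ _ hβ, if_pos hLft, if_pos hRgt]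

/-- the coproduct rule for `{D_γ(q,t)}` in two-alphabet form:
`D_γ(q,t)(x,y) = ∑_{α·β=γ} D_α(q,t)(x) · D_β(q,t)(y)`. -/
theorem statement11 (γ : List ℕ) (hγ : IsComp γ) :
    Dqt Sig2 Fqt PTot qv tv γ =
      ∑ᶠ (p : List ℕ × List ℕ) (_ : IsComp p.1 ∧ IsComp p.2 ∧ p.1 ++ p.2 = γ),
        Dqt Sig2 Fqt PLft qv tv p.1 * Dqt Sig2 Fqt PRgt qv tv p.2 := by
  rw [hγ.finsum_append_eq_sum]
  ext d
  have hTot : ∀ i ∈ d.support, PTot i := fun _ _ => trivial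
  rw [coeff_Dqt _ _ _ hγ, if_pos hTot, map_sum, expWord_eq_append (fun _ _ => PLft_of_le) d,
    hγ.coarseningCoeff_append_eq_sum qv_ne_zero tv (isComp_expWord _) (isComp_expWord _)]
  exact Finset.sum_congr rfl fun j _ => (coeff_Dqt_mul_Dqt qv tv (hγ.take j) (hγ.drop j) d).symm

end
end QSymPaper
end
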